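/- For the virtual knot K' with five classical crossings having signs sgn(β)=sgn(δ₁)=sgn(δ₂)=−1, sgn(α)=sgn(γ)=1 and indices Ind(γ)=Ind(δ₁)=Ind(δ₂)=0, Ind(α)=Ind(β)=1, the affine index polynomial vanishes: P_{K'}(t) = Σ_c sgn(c)(t^{Ind(c)} − 1) = 0; yet with ∇J_{1,1} smoothing values −4 at δ₁, 4 at δ₂ and 0 elsewhere, the polynomial F^{1,1,1}_{K'}(t, ℓ₂) = −ℓ₂^{−4} − ℓ₂^{4} + 2 is nonzero, so F^{1,1,1} distinguishes K' from the unknot while the affine index polynomial does not. -/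

import Mathlib

/-- For the virtual knot `K'` with five crossings `α, β, γ, δ₁, δ₂` (indexed `0..4`)
with the stated signs, indices, and `∇J_{1,1}`-smoothing values, the affine index
polynomial vanishes, `P = 0`, while `F^{1,1,1}(t, ℓ) = -ℓ^{-4} - ℓ^{4} + 2 ≠ 0`;
so `F^{1,1,1}` distinguishes `K'` from the unknot while `P` does not.
(We work in `ℤ[t^±1, ℓ^±1]` modeled as `AddMonoidAlgebra ℤ (ℤ × ℤ)`,
with monomial `t^i ℓ^j = single (i, j) 1`.) -/
theorem stmt18 (sgn Ind j : Fin 5 → ℤ)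
    (hs : sgn 0 = 1 ∧ sgn 1 = -1 ∧ sgn 2 = 1 ∧ sgn 3 = -1 ∧ sgn 4 = -1)
    (hi : Ind 0 = 1 ∧ Ind 1 = 1 ∧ Ind 2 = 0 ∧ Ind 3 = 0 ∧ Ind 4 = 0)
    (hj : j 0 = 0 ∧ j 1 = 0 ∧ j 2 = 0 ∧ j 3 = -4 ∧ j 4 = 4) :
    let J : ℤ := 0
    let T : Finset (Fin 5) := Finset.univ.filter (fun c => j c = J ∨ j c = -J)
    let t : ℤ × ℤ → AddMonoidAlgebra ℤ (ℤ × ℤ) := fun p => AddMonoidAlgebra.single p 1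
    let P : AddMonoidAlgebra ℤ (ℤ × ℤ) := ∑ c, sgn c • (t (Ind c, 0) - 1)
    let F : AddMonoidAlgebra ℤ (ℤ × ℤ) :=
      (∑ c ∈ T, sgn c • ((t (Ind c, 0) - 1) * t (0, j c)))
        + (∑ c ∈ Tᶜ, sgn c • (t (Ind c, j c) - t (0, J)))
    P = 0 ∧ F = - t (0, -4) - t (0, 4) + 2 ∧ F ≠ 0 := by
  obtain ⟨s0,s1,s2,s3,s4⟩ := hs
  obtain ⟨i0,i1,i2,i3,i4⟩ := hi
  obtain ⟨j0,j1,j2,j3,j4⟩ := hj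
  intro J T t P F
  have hone : t (0,0) = 1 := rfl
  have hP : P = 0 := by
    show (∑ c, sgn c • (t (Ind c, 0) - 1)) = 0
    rw [Fin.sum_univ_five, s0, s1, s2, s3, s4, i0, i1, i2, i3, i4, hone]
    simp [zsmul_eq_mul]
  have hT : T = {0, 1, 2} := by
    show Finset.univ.filter _ = _
    ext c
    fin_cases c <;>
      simp [j0, j1, j2, j3, j4] <;> decide
  have hF : F = - t (0,-4) - t (0,4) + 2 := by
    show (∑ c ∈ T, sgn c • ((t (Ind c, 0) - 1) * t (0, j c)))
        + (∑ c ∈ Tᶜ, sgn c • (t (Ind c, j c) - t (0, (0:ℤ)))) = _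
    rw [hT, show (({0,1,2} : Finset (Fin 5))ᶜ) = {3,4} from by decide]
    rw [show ((({0,1,2} : Finset (Fin 5))) : Finset (Fin 5)) = insert 0 (insert 1 {2}) from rfl]
    rw [Finset.sum_insert (by decide), Finset.sum_insert (by decide), Finset.sum_singleton,
      Finset.sum_insert (by decide), Finset.sum_singleton]
    rw [s0, s1, s2, s3, s4, i0, i1, i2, i3, i4, j0, j1, j2, j3, j4, hone]
    simp [zsmul_eq_mul]
    ring
  refine ⟨hP, hF, ?_⟩
  rw [hF]
  intro h
  have h4 := congrArg (fun x : AddMonoidAlgebra ℤ (ℤ × ℤ) => x.coeff ((0:ℤ), (4:ℤ))) h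
  simp [t, AddMonoidAlgebra.coeff_ofNat, AddMonoidAlgebra.coeff_single, Finsupp.single_apply] at h4
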